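/- Let T be the k-wounded spider S_{t,t−k} obtained from the star K_{1,t} (t ≥ 2, 1 ≤ k ≤ t−1) by subdividing exactly t−k of its edges. Then T is γ-q-critical with q = n(T) − k, where n(T) = 2t − k + 1 is the order of T. -/

import Mathlib

open SimpleGraph

/-- `D` is a dominating set of `G`. -/
def SimpleGraph.IsDomSet {V : Type*} (G : SimpleGraph V) (D : Set V) : Prop :=
  ∀ v ∉ D, ∃ u ∈ D, G.Adj u v

/-- The domination number of `G`. -/
noncomputable def SimpleGraph.domNum {V : Type*} [Fintype V] (G : SimpleGraph V) : ℕ :=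
  sInf {k | ∃ D : Finset V, D.card = k ∧ G.IsDomSet ↑D}

/-- The graph obtained from `G` by subdividing each edge in `F` once: each `e ∈ F`
contributes a new vertex adjacent to the two endpoints of `e`, and the edges of `F`
are removed. -/
def SimpleGraph.subdiv {V : Type*} (G : SimpleGraph V) (F : Finset (Sym2 V)) :
    SimpleGraph (V ⊕ {e : Sym2 V // e ∈ F}) :=
  SimpleGraph.fromRel (fun a b => match a, b with
    | Sum.inl u, Sum.inl v => G.Adj u v ∧ s(u, v) ∉ F
    | Sum.inl u, Sum.inr e => u ∈ (e : Sym2 V)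
    | _, _ => False)

/-- `G` is `γ`-`q`-critical: subdividing any `q` edges increases the domination number,
while some set of `q - 1` edges can be subdivided without increasing it. -/
def SimpleGraph.IsQCritical {V : Type*} [Fintype V] (G : SimpleGraph V) (q : ℕ) : Prop :=
  (∀ F : Finset (Sym2 V), ↑F ⊆ G.edgeSet → F.card = q →
      G.domNum < (G.subdiv F).domNum) ∧
  (∃ F : Finset (Sym2 V), ↑F ⊆ G.edgeSet ∧ F.card = q - 1 ∧
      (G.subdiv F).domNum = G.domNum)

/-
Let `c` be the centre and `s = |F|`, so that `q = 2s + 1`. No vertex other than `c` dominates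
two leaves, and this survives subdivision. Hence a dominating set needs `t > s` vertices if it
avoids `c`, and `1 + #(leaves not adjacent to c)` if it contains `c`; with the dominating set
`{c} ∪ {middle vertices}` this gives `γ = s + 1`. Subdividing `2s + 1` edges must hit the edge of
an unwounded leg, which separates `s + 1` leaves from `c`, giving `γ ≥ s + 2`; if `c` is not
used and `t = s + 1`, all edges are subdivided and the subdivision vertex between `c` and a middle
vertex needs a dominator of its own. Subdividing the `2s` edges of the wounded legs keeps
`γ = s + 1`: `c` together with the subdivision vertices next to the wounded leaves dominates,
and subdividing never decreases `γ`.
-/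

open Finset Sum

namespace SimpleGraph

variable {V : Type*} {G : SimpleGraph V}

variable (G) in
def Dominates (u v : V) : Prop := u = v ∨ G.Adj u v

lemma dominates_refl (v : V) : G.Dominates v v := Or.inl rfl

lemma dominates_of_mem_edge {x : Sym2 V} (hx : x ∈ G.edgeSet) {a b : V} (ha : a ∈ x)
    (hb : b ∈ x) : G.Dominates a b := by
  by_cases hab : a = b
  · exact Or.inl hab
  · rw [(Sym2.mem_and_mem_iff hab).mp ⟨ha, hb⟩] at hx
    exact Or.inr hx

lemma IsDomSet.exists_dominates {D : Set V} (hD : G.IsDomSet D) (v : V) :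
    ∃ u ∈ D, G.Dominates u v := by
  by_cases hv : v ∈ D
  · exact ⟨v, hv, dominates_refl v⟩
  · obtain ⟨u, hu, huv⟩ := hD v hv
    exact ⟨u, hu, Or.inr huv⟩

lemma domNum_le_card [Fintype V] {D : Finset V} (hD : G.IsDomSet ↑D) : G.domNum ≤ D.card :=
  Nat.sInf_le ⟨D, rfl, hD⟩

lemma le_domNum [Fintype V] {m : ℕ} (h : ∀ D : Finset V, G.IsDomSet ↑D → m ≤ D.card) :
    m ≤ G.domNum :=
  le_csInf ⟨_, univ, rfl, fun v hv => absurd (mem_coe.mpr (mem_univ v)) hv⟩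
    fun _ ⟨D, hD, hdom⟩ => hD ▸ h D hdom

lemma card_le_card_of_dominates {ι : Type*} {D : Finset V} {s : Finset ι} {w : ι → V}
    (hdom : ∀ i ∈ s, ∃ u ∈ D, G.Dominates u (w i))
    (hsep : ∀ u ∈ D, ∀ i ∈ s, ∀ j ∈ s, G.Dominates u (w i) → G.Dominates u (w j) → i = j) :
    s.card ≤ D.card := by
  refine card_le_card_of_forall_subsingleton (fun i u => G.Dominates u (w i))
    (fun i hi => ?_) fun u hu i ⟨hi, hui⟩ j ⟨hj, huj⟩ => hsep u hu i hi j hj hui huj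
  obtain ⟨u, hu, hui⟩ := hdom i hi
  exact ⟨u, hu, hui⟩

variable (G) in
structure IsPackingAwayFrom {ι : Type*} (c : V) (ℓ : ι → V) : Prop where
  ne_center : ∀ i, ℓ i ≠ c
  eq_of_dominates : ∀ u ≠ c, ∀ i j, G.Dominates u (ℓ i) → G.Dominates u (ℓ j) → i = j

namespace IsPackingAwayFrom

variable {ι : Type*} {c : V} {ℓ : ι → V} {D : Finset V}

lemma card_add_one_le (hP : G.IsPackingAwayFrom c ℓ) (hD : G.IsDomSet ↑D) (hc : c ∈ D)
    {I : Finset ι} (hI : ∀ i ∈ I, ¬G.Adj c (ℓ i)) : I.card + 1 ≤ D.card := by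
  classical
  have hI_le : I.card ≤ (D.erase c).card := by
    refine card_le_card_of_dominates (w := ℓ) (fun i hi => ?_)
      fun u hu i _ j _ => hP.eq_of_dominates u (ne_of_mem_erase hu) i j
    obtain ⟨u, hu, hdom⟩ := hD.exists_dominates (ℓ i)
    refine ⟨u, mem_erase.mpr ⟨?_, hu⟩, hdom⟩
    rintro rfl
    exact hdom.elim (hP.ne_center i).symm (hI i hi)
  rw [card_erase_of_mem hc] at hI_le
  have := card_pos.mpr ⟨c, hc⟩
  omega

lemma card_le [Fintype ι] (hP : G.IsPackingAwayFrom c ℓ) (hD : G.IsDomSet ↑D) (hc : c ∉ D) :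
    Fintype.card ι ≤ D.card :=
  card_le_card_of_dominates (s := univ) (fun i _ => hD.exists_dominates (ℓ i))
    fun u hu i _ j _ => hP.eq_of_dominates u (ne_of_mem_of_not_mem hu hc) i j

end IsPackingAwayFrom

section Subdivision

variable {F : Finset (Sym2 V)} {u v : V} {e e' : {e : Sym2 V // e ∈ F}}

@[simp] lemma subdiv_adj_inl_inl :
    (G.subdiv F).Adj (inl u) (inl v) ↔ G.Adj u v ∧ s(u, v) ∉ F := by
  refine ⟨?_, fun h => ⟨by simpa using h.1.ne, Or.inl h⟩⟩
  rintro ⟨-, h | ⟨hvu, hF⟩⟩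
  · exact h
  · exact ⟨hvu.symm, Sym2.eq_swap ▸ hF⟩

@[simp] lemma subdiv_adj_inl_inr : (G.subdiv F).Adj (inl u) (inr e) ↔ u ∈ e.val :=
  ⟨fun ⟨_, h⟩ => h.elim id False.elim, fun h => ⟨by simp, Or.inl h⟩⟩

@[simp] lemma subdiv_adj_inr_inl : (G.subdiv F).Adj (inr e) (inl u) ↔ u ∈ e.val := by
  rw [adj_comm, subdiv_adj_inl_inr]

@[simp] lemma not_subdiv_adj_inr_inr : ¬(G.subdiv F).Adj (inr e) (inr e') := by
  rintro ⟨-, h | h⟩ <;> exact h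

lemma Dominates.of_subdiv (h : (G.subdiv F).Dominates (inl u) (inl v)) : G.Dominates u v :=
  h.imp (fun h => inl_injective h) fun h => (subdiv_adj_inl_inl.mp h).1

lemma subdiv_dominates_inr_inl : (G.subdiv F).Dominates (inr e) (inl u) ↔ u ∈ e.val := by
  simp [Dominates]

lemma domNum_le_domNum_subdiv [Fintype V] (hF : ↑F ⊆ G.edgeSet) :
    G.domNum ≤ (G.subdiv F).domNum := by
  classical
  refine le_domNum fun D' hD' => ?_
  -- each subdivision vertex is replaced by an endpoint of its edge
  let f : V ⊕ {e : Sym2 V // e ∈ F} → V := Sum.elim id fun e => e.val.out.1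
  refine le_trans (domNum_le_card (D := D'.image f) fun v hv => ?_) card_image_le
  have hv' : inl v ∉ D' := fun h => hv (mem_image_of_mem f h)
  obtain ⟨x, hx, hxv⟩ := hD' _ hv'
  rcases x with y | e
  · exact ⟨y, mem_image_of_mem f hx, (subdiv_adj_inl_inl.mp hxv).1⟩
  · have hne : e.val.out.1 ≠ v := fun h => hv (h ▸ mem_image_of_mem f hx)
    have := dominates_of_mem_edge (hF e.prop) (Sym2.out_fst_mem e.val)
      (subdiv_adj_inr_inl.mp hxv)
    exact ⟨_, mem_image_of_mem f hx, this.resolve_left hne⟩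

end Subdivision

namespace IsPackingAwayFrom

variable {ι : Type*} {c : V} {ℓ : ι → V} {F : Finset (Sym2 V)}

lemma subdiv (hP : G.IsPackingAwayFrom c ℓ) (hF : ↑F ⊆ G.edgeSet) :
    (G.subdiv F).IsPackingAwayFrom (inl c) (fun i => inl (ℓ i)) := by
  refine ⟨fun i h => hP.ne_center i (inl_injective h), fun u hu i j hi hj => ?_⟩
  rcases u with u | e
  · exact hP.eq_of_dominates u (fun h => hu (congrArg inl h)) i j hi.of_subdiv hj.of_subdiv
  · rw [subdiv_dominates_inr_inl] at hi hj
    exact hP.eq_of_dominates _ (hP.ne_center i) i j (dominates_refl _)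
      (dominates_of_mem_edge (hF e.prop) hi hj)

/-- Once every edge is subdivided, a subdivision vertex next to `c` gives one more witness. -/
lemma card_add_one_le_subdiv [Fintype ι] (hP : G.IsPackingAwayFrom c ℓ) (hF : ↑F = G.edgeSet)
    {m : V} (hcm : G.Adj c m) (hm : ∀ i, m ≠ ℓ i) {D : Finset (V ⊕ {e : Sym2 V // e ∈ F})}
    (hD : (G.subdiv F).IsDomSet ↑D) (hc : inl c ∉ D) : Fintype.card ι + 1 ≤ D.card := by
  have hP' := hP.subdiv hF.subset
  let a : V ⊕ {e : Sym2 V // e ∈ F} := inr ⟨s(c, m), by rw [← Finset.mem_coe, hF]; exact hcm⟩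
  have hsep : ∀ u ≠ inl c, ∀ i, (G.subdiv F).Dominates u a →
      ¬(G.subdiv F).Dominates u (inl (ℓ i)) := by
    rintro u hu i (rfl | hua) hui
    · rw [subdiv_dominates_inr_inl, Sym2.mem_iff] at hui
      exact hui.elim (hP.ne_center i) (hm i).symm
    · rcases u with v | e
      · rw [subdiv_adj_inl_inr, Sym2.mem_iff] at hua
        obtain rfl := hua.resolve_left fun h => hu (congrArg inl h)
        rcases hui with h | h
        · exact hm i (inl_injective h)
        · obtain ⟨hadj, hnF⟩ := subdiv_adj_inl_inl.mp h
          exact hnF (by rw [← Finset.mem_coe, hF]; exact hadj)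
      · exact not_subdiv_adj_inr_inr hua
  simpa using card_le_card_of_dominates (s := Finset.univ)
    (w := fun o : Option ι => o.elim a fun i => inl (ℓ i))
    (fun o _ => hD.exists_dominates _) fun u hu o _ o' _ ho ho' => by
      have hu : u ≠ inl c := ne_of_mem_of_not_mem hu hc
      rcases o with _ | i <;> rcases o' with _ | j
      · rfl
      · exact absurd ho' (hsep u hu j ho)
      · exact absurd ho (hsep u hu i ho')
      · exact congrArg some (hP'.eq_of_dominates u hu i j ho ho')

end IsPackingAwayFrom

end SimpleGraph

section Spider

variable {t : ℕ} {F : Finset (Sym2 (Fin 1 ⊕ Fin t))}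

lemma mem_edgeSet_completeBipartiteGraph_fin_one {x : Sym2 (Fin 1 ⊕ Fin t)} :
    x ∈ (completeBipartiteGraph (Fin 1) (Fin t)).edgeSet ↔ ∃ i, x = s(inl 0, inr i) := by
  induction x using Sym2.ind with
  | _ a b =>
    rcases a with a | a <;> rcases b with b | b <;> simp [Fin.fin_one_eq_zero]

lemma isPackingAwayFrom_completeBipartiteGraph_fin_one :
    (completeBipartiteGraph (Fin 1) (Fin t)).IsPackingAwayFrom (inl 0) inr := by
  refine ⟨by simp, fun u hu i j hi hj => ?_⟩
  rcases u with a | k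
  · exact absurd (Fin.fin_one_eq_zero a ▸ rfl) hu
  · simp only [Dominates, inr.injEq, completeBipartiteGraph_adj] at hi hj
    simp_all

abbrev spider (F : Finset (Sym2 (Fin 1 ⊕ Fin t))) :
    SimpleGraph ((Fin 1 ⊕ Fin t) ⊕ {e // e ∈ F}) :=
  (completeBipartiteGraph (Fin 1) (Fin t)).subdiv F

def wounded (F : Finset (Sym2 (Fin 1 ⊕ Fin t))) : Finset (Fin t) :=
  univ.filter fun i => s(inl 0, inr i) ∈ F

@[simp] lemma mem_wounded {i : Fin t} : i ∈ wounded F ↔ s(inl 0, inr i) ∈ F := by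
  simp [wounded]

lemma card_wounded (hF : ↑F ⊆ (completeBipartiteGraph (Fin 1) (Fin t)).edgeSet) :
    (wounded F).card = F.card := by
  classical
  have hinj : Function.Injective fun i : Fin t => (s(inl 0, inr i) : Sym2 (Fin 1 ⊕ Fin t)) := by
    intro i j h; simpa using h
  rw [← card_image_of_injective (wounded F) hinj]
  congr 1
  ext x
  simp only [mem_image, mem_wounded]
  refine ⟨fun ⟨i, hi, hx⟩ => hx ▸ hi, fun hx => ?_⟩
  obtain ⟨i, rfl⟩ := mem_edgeSet_completeBipartiteGraph_fin_one.mp (hF hx)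
  exact ⟨i, hx, rfl⟩

def pendantEdge (F : Finset (Sym2 (Fin 1 ⊕ Fin t))) (i : Fin t) :
    Sym2 ((Fin 1 ⊕ Fin t) ⊕ {e // e ∈ F}) :=
  if h : s(inl 0, inr i) ∈ F then s(inr ⟨_, h⟩, inl (inr i)) else s(inl (inl 0), inl (inr i))

lemma pendantEdge_of_mem {i : Fin t} (h : s(inl 0, inr i) ∈ F) :
    pendantEdge F i = s(inr ⟨_, h⟩, inl (inr i)) :=
  dif_pos h

lemma pendantEdge_of_notMem {i : Fin t} (h : s(inl 0, inr i) ∉ F) :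
    pendantEdge F i = s(inl (inl 0), inl (inr i)) :=
  dif_neg h

lemma pendantEdge_mem_edgeSet (i : Fin t) : pendantEdge F i ∈ (spider F).edgeSet := by
  by_cases h : s(inl 0, inr i) ∈ F
  · simp [pendantEdge_of_mem h]
  · simp [pendantEdge_of_notMem h, h]

lemma eq_pendantEdge_or_of_mem_edgeSet_spider (hF : ↑F ⊆ (completeBipartiteGraph (Fin 1) (Fin t)).edgeSet)
    {x : Sym2 ((Fin 1 ⊕ Fin t) ⊕ {e // e ∈ F})} (hx : x ∈ (spider F).edgeSet) :
    (∃ i, x = pendantEdge F i) ∨ ∃ e, x = s(inl (inl 0), inr e) := by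
  have middle : ∀ a (e : {e // e ∈ F}), a ∈ e.val →
      (∃ i, s(inl a, inr e) = pendantEdge F i) ∨ ∃ e', s(inl a, inr e) = s(inl (inl 0), inr e') := by
    rintro a ⟨e, he⟩ ha
    obtain ⟨i, rfl⟩ := mem_edgeSet_completeBipartiteGraph_fin_one.mp (hF he)
    rcases Sym2.mem_iff.mp ha with rfl | rfl
    · exact Or.inr ⟨_, rfl⟩
    · exact Or.inl ⟨i, by rw [pendantEdge_of_mem he, Sym2.eq_swap]⟩
  induction x using Sym2.ind with
  | _ a b =>
    rw [mem_edgeSet] at hx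
    rcases a with a | e <;> rcases b with b | e'
    · obtain ⟨hab, habF⟩ := subdiv_adj_inl_inl.mp hx
      obtain ⟨i, hi⟩ := mem_edgeSet_completeBipartiteGraph_fin_one.mp ((mem_edgeSet _).mpr hab)
      refine Or.inl ⟨i, ?_⟩
      rw [pendantEdge_of_notMem (hi ▸ habF), ← Sym2.map_mk, hi, Sym2.map_mk]
    · exact middle a e' (subdiv_adj_inl_inr.mp hx)
    · rw [Sym2.eq_swap]; exact middle b e (subdiv_adj_inr_inl.mp hx)
    · exact absurd hx not_subdiv_adj_inr_inr

def woundedEdges (F : Finset (Sym2 (Fin 1 ⊕ Fin t))) :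
    Finset (Sym2 ((Fin 1 ⊕ Fin t) ⊕ {e // e ∈ F})) :=
  (wounded F).image (pendantEdge F) ∪ univ.image fun e => s(inl (inl 0), inr e)

lemma woundedEdges_subset (hF : ↑F ⊆ (completeBipartiteGraph (Fin 1) (Fin t)).edgeSet) :
    ↑(woundedEdges F) ⊆ (spider F).edgeSet := by
  intro x hx
  simp only [woundedEdges, coe_union, coe_image, Set.mem_union, Set.mem_image] at hx
  rcases hx with ⟨i, -, rfl⟩ | ⟨e, -, rfl⟩
  · exact pendantEdge_mem_edgeSet i
  · obtain ⟨e, he⟩ := e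
    obtain ⟨i, rfl⟩ := mem_edgeSet_completeBipartiteGraph_fin_one.mp (hF he)
    simp

lemma card_woundedEdges (hF : ↑F ⊆ (completeBipartiteGraph (Fin 1) (Fin t)).edgeSet) :
    (woundedEdges F).card = 2 * F.card := by
  classical
  have hinj : Set.InjOn (pendantEdge F) ↑(wounded F) := by
    intro i hi j hj hij
    rw [mem_coe, mem_wounded] at hi hj
    simpa [pendantEdge_of_mem hi, pendantEdge_of_mem hj] using hij
  have hdisj : Disjoint ((wounded F).image (pendantEdge F))
      (univ.image fun e : {e // e ∈ F} => s(inl (inl 0), inr e)) := by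
    simp only [Finset.disjoint_left, mem_image, mem_univ, true_and, not_exists]
    rintro _ ⟨i, hi, rfl⟩ e
    simp [pendantEdge_of_mem (mem_wounded.mp hi)]
  rw [woundedEdges, card_union_of_disjoint hdisj, card_image_of_injOn hinj, card_wounded hF,
    card_image_of_injective _ fun e e' h => by simpa using h, card_univ, Fintype.card_coe]
  ring

lemma coe_eq_edgeSet_spider_of_card_le
    (hF : ↑F ⊆ (completeBipartiteGraph (Fin 1) (Fin t)).edgeSet)
    {F' : Finset (Sym2 ((Fin 1 ⊕ Fin t) ⊕ {e // e ∈ F}))} (hF' : ↑F' ⊆ (spider F).edgeSet)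
    (hcard : t + F.card ≤ F'.card) : ↑F' = (spider F).edgeSet := by
  classical
  have hsub : (spider F).edgeFinset ⊆
      univ.image (pendantEdge F) ∪ univ.image fun e => s(inl (inl 0), inr e) := by
    intro x hx
    rcases eq_pendantEdge_or_of_mem_edgeSet_spider hF (mem_edgeFinset.mp hx) with ⟨i, rfl⟩ | ⟨e, rfl⟩ <;> simp
  have hle : (spider F).edgeFinset.card ≤ t + F.card :=
    calc (spider F).edgeFinset.card
        _ ≤ (univ.image (pendantEdge F)).card +
            (univ.image fun e : {e // e ∈ F} => s(inl (inl 0), inr e)).card :=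
          (card_le_card hsub).trans (card_union_le _ _)
        _ ≤ t + F.card := by
          gcongr <;> refine card_image_le.trans ?_ <;> simp
  rw [← coe_edgeFinset, eq_of_subset_of_card_le (fun x hx => mem_edgeFinset.mpr (hF' hx))
    (hle.trans hcard)]

lemma exists_pendantEdge_mem_of_card_lt
    (hF : ↑F ⊆ (completeBipartiteGraph (Fin 1) (Fin t)).edgeSet)
    {F' : Finset (Sym2 ((Fin 1 ⊕ Fin t) ⊕ {e // e ∈ F}))} (hF' : ↑F' ⊆ (spider F).edgeSet)
    (hcard : 2 * F.card < F'.card) : ∃ i ∉ wounded F, s(inl (inl 0), inl (inr i)) ∈ F' := by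
  classical
  by_contra! h
  have hsub : F' ⊆ woundedEdges F := by
    intro x hx
    simp only [woundedEdges, mem_union, mem_image, mem_univ, true_and]
    rcases eq_pendantEdge_or_of_mem_edgeSet_spider hF (hF' hx) with ⟨i, rfl⟩ | ⟨e, rfl⟩
    · by_cases hi : i ∈ wounded F
      · exact Or.inl ⟨i, hi, rfl⟩
      · exact absurd (pendantEdge_of_notMem (mt mem_wounded.mpr hi) ▸ hx) (h i hi)
    · exact Or.inr ⟨e, rfl⟩
  have := card_le_card hsub
  rw [card_woundedEdges hF] at this
  omega

lemma isDomSet_spider :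
    (spider F).IsDomSet ↑(insert (inl (inl 0)) (univ.image inr) :
      Finset ((Fin 1 ⊕ Fin t) ⊕ {e // e ∈ F})) := by
  rintro ((a | i) | e) hv
  · simp [Fin.fin_one_eq_zero a] at hv
  · by_cases h : s(inl 0, inr i) ∈ F
    · exact ⟨inr ⟨_, h⟩, by simp, by simp⟩
    · exact ⟨inl (inl 0), by simp, by simp [h]⟩
  · simp at hv

lemma domNum_spider (hF : ↑F ⊆ (completeBipartiteGraph (Fin 1) (Fin t)).edgeSet)
    (ht : F.card < t) : (spider F).domNum = F.card + 1 := by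
  classical
  have hP := isPackingAwayFrom_completeBipartiteGraph_fin_one.subdiv hF
  refine le_antisymm ((domNum_le_card isDomSet_spider).trans ?_) (le_domNum fun D hD => ?_)
  · refine (card_insert_le _ _).trans ?_
    rw [card_image_of_injective _ inr_injective, card_univ, Fintype.card_coe]
  by_cases hc : inl (inl 0) ∈ D
  · have := hP.card_add_one_le hD hc (I := wounded F) fun i hi => by
      simp [mem_wounded.mp hi]
    rwa [card_wounded hF] at this
  · have := hP.card_le hD hc
    simp only [Fintype.card_fin] at this
    omega

lemma add_two_le_domNum_subdiv_spider
    (hF : ↑F ⊆ (completeBipartiteGraph (Fin 1) (Fin t)).edgeSet) (hF₀ : F.Nonempty)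
    (ht : F.card < t) {F' : Finset (Sym2 ((Fin 1 ⊕ Fin t) ⊕ {e // e ∈ F}))}
    (hF' : ↑F' ⊆ (spider F).edgeSet) (hcard : F'.card = 2 * F.card + 1) :
    F.card + 2 ≤ ((spider F).subdiv F').domNum := by
  classical
  have hP := isPackingAwayFrom_completeBipartiteGraph_fin_one.subdiv hF
  refine le_domNum fun D hD => ?_
  by_cases hc : inl (inl (inl 0)) ∈ D
  · obtain ⟨i₀, hi₀, hi₀F'⟩ := exists_pendantEdge_mem_of_card_lt hF hF' (by omega)
    have := (hP.subdiv hF').card_add_one_le hD hc (I := insert i₀ (wounded F)) fun i hi => by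
      rcases mem_insert.mp hi with rfl | hi
      · simp [hi₀F']
      · simp [mem_wounded.mp hi]
    rw [card_insert_of_notMem hi₀, card_wounded hF] at this
    omega
  · rcases (show F.card + 2 ≤ t ∨ t = F.card + 1 by omega) with ht' | ht'
    · have := (hP.subdiv hF').card_le hD hc
      simp only [Fintype.card_fin] at this
      omega
    · -- the spider has `t + |F| = 2|F| + 1` edges, so `F'` subdivides all of them
      obtain ⟨e, he⟩ := hF₀
      obtain ⟨i, rfl⟩ := mem_edgeSet_completeBipartiteGraph_fin_one.mp (hF he)
      have := hP.card_add_one_le_subdiv (coe_eq_edgeSet_spider_of_card_le hF hF' (by omega))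
        (m := inr ⟨_, he⟩) (by simp) (by simp) hD hc
      simp only [Fintype.card_fin] at this
      omega

lemma domNum_subdiv_woundedEdges_le
    (hF : ↑F ⊆ (completeBipartiteGraph (Fin 1) (Fin t)).edgeSet) :
    ((spider F).subdiv (woundedEdges F)).domNum ≤ F.card + 1 := by
  classical
  have hmem : ∀ i ∈ wounded F, pendantEdge F i ∈ woundedEdges F := fun i hi =>
    mem_union_left _ (mem_image_of_mem _ hi)
  let D : Finset (((Fin 1 ⊕ Fin t) ⊕ {e // e ∈ F}) ⊕ {x // x ∈ woundedEdges F}) :=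
    insert (inl (inl (inl 0)))
      ((wounded F).attach.image fun i => inr ⟨pendantEdge F i.1, hmem i.1 i.2⟩)
  have hD_mem : ∀ i (hi : i ∈ wounded F), inr ⟨pendantEdge F i, hmem i hi⟩ ∈ D := fun i hi =>
    mem_insert_of_mem (mem_image_of_mem _ (mem_attach _ ⟨i, hi⟩))
  have hD : ((spider F).subdiv (woundedEdges F)).IsDomSet ↑D := by
    rintro (((a | i) | e) | ⟨x, hx⟩) hv
    · simp [D, Fin.fin_one_eq_zero a] at hv
    · by_cases hi : i ∈ wounded F
      · exact ⟨_, hD_mem i hi, by simp [pendantEdge_of_mem (mem_wounded.mp hi)]⟩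
      · refine ⟨_, mem_insert_self _ _, ?_⟩
        simp +contextual [mem_wounded.not.mp hi, woundedEdges, pendantEdge_of_mem]
    · obtain ⟨e, he⟩ := e
      obtain ⟨i, rfl⟩ := mem_edgeSet_completeBipartiteGraph_fin_one.mp (hF he)
      exact ⟨_, hD_mem i (mem_wounded.mpr he), by simp [pendantEdge_of_mem he]⟩
    · simp only [woundedEdges, mem_union, mem_image, mem_univ, true_and] at hx
      rcases hx with ⟨i, hi, rfl⟩ | ⟨e, rfl⟩
      · exact absurd (hD_mem i hi) hv
      · exact ⟨_, mem_insert_self _ _, by simp⟩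
  refine (domNum_le_card hD).trans ((card_insert_le _ _).trans ?_)
  simpa [card_wounded hF] using card_image_le (s := (wounded F).attach)

end Spider

theorem stmt9_general (t k : ℕ) (hk1 : 1 ≤ k) (hk2 : k ≤ t - 1)
    (F : Finset (Sym2 (Fin 1 ⊕ Fin t)))
    (hF : ↑F ⊆ (completeBipartiteGraph (Fin 1) (Fin t)).edgeSet)
    (hcard : F.card = t - k) :
    ((completeBipartiteGraph (Fin 1) (Fin t)).subdiv F).IsQCritical (2 * t - k + 1 - k) := by
  have hq : 2 * t - k + 1 - k = 2 * F.card + 1 := by omega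
  have hγ : (spider F).domNum = F.card + 1 := domNum_spider hF (by omega)
  rw [hq]
  refine ⟨fun F' hF' hF'card => ?_, woundedEdges F, woundedEdges_subset hF, ?_, ?_⟩
  · rw [hγ]
    exact add_two_le_domNum_subdiv_spider hF (card_pos.mp (by omega)) (by omega) hF' hF'card
  · rw [card_woundedEdges hF, Nat.add_sub_cancel]
  · refine le_antisymm ((domNum_subdiv_woundedEdges_le hF).trans hγ.ge) ?_
    exact domNum_le_domNum_subdiv (woundedEdges_subset hF)

theorem stmt9 (t k : ℕ) (ht : 2 ≤ t) (hk1 : 1 ≤ k) (hk2 : k ≤ t - 1)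
    (F : Finset (Sym2 (Fin 1 ⊕ Fin t)))
    (hF : ↑F ⊆ (completeBipartiteGraph (Fin 1) (Fin t)).edgeSet)
    (hcard : F.card = t - k) :
    ((completeBipartiteGraph (Fin 1) (Fin t)).subdiv F).IsQCritical (2 * t - k + 1 - k) :=
  stmt9_general t k hk1 hk2 F hF hcard
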